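/- Kolesnikov's identity for the Bakry–Émery Ricci tensor: if u solves the weighted Monge–Ampère equation and φ := (1/2)(u_{,p} ξ^p + v_q x^q), then at every point of N one has (Ric_φ)_{ij} = (1/4) g^{pq} g^{kl} u_{,ipk} u_{,jql}. -/

import Mathlib

open scoped BigOperators
noncomputable section

namespace KRS

variable {n : ℕ}

/-- Partial derivative of `f` in the `i`-th coordinate direction. -/
def pd (i : Fin n) (f : (Fin n → ℝ) → ℝ) : (Fin n → ℝ) → ℝ :=
  fun x => fderiv ℝ f x (Pi.single i 1)

/-- The Hessian matrix `g(x)` of `u`, with entries `g_{ij} = ∂²u/∂x^i∂x^j`. -/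
def hessian (u : (Fin n → ℝ) → ℝ) (x : Fin n → ℝ) : Matrix (Fin n) (Fin n) ℝ :=
  Matrix.of fun i j => pd i (pd j u) x

/-- The inverse matrix `g(x)⁻¹`, with entries `g^{ij}`. -/
def ginv (u : (Fin n → ℝ) → ℝ) (x : Fin n → ℝ) : Matrix (Fin n) (Fin n) ℝ :=
  (hessian u x)⁻¹

/-- Third iterated partial derivative `u_{,ijk}`. -/
def d3 (u : (Fin n → ℝ) → ℝ) (i j k : Fin n) : (Fin n → ℝ) → ℝ :=
  pd i (pd j (pd k u))

/-- Fourth iterated partial derivative `u_{,ijkl}`. -/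
def d4 (u : (Fin n → ℝ) → ℝ) (i j k l : Fin n) : (Fin n → ℝ) → ℝ :=
  pd i (pd j (pd k (pd l u)))

/-- Christoffel symbols `Γ^k_{ij} = (1/2) g^{kl}(∂_i g_{jl} + ∂_j g_{il} − ∂_l g_{ij})`. -/
def Christoffel (u : (Fin n → ℝ) → ℝ) (k i j : Fin n) : (Fin n → ℝ) → ℝ :=
  fun x => (1/2) * ∑ l, ginv u x k l * (d3 u i j l x + d3 u j i l x - d3 u l i j x)

/-- Riemann curvature tensor
`Rm_{ijkl} = g_{is}(∂_k Γ^s_{lj} − ∂_l Γ^s_{kj} + Γ^s_{kp} Γ^p_{lj} − Γ^s_{lp} Γ^p_{kj})`. -/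
def Rm (u : (Fin n → ℝ) → ℝ) (i j k l : Fin n) : (Fin n → ℝ) → ℝ :=
  fun x => ∑ s, hessian u x i s *
    (pd k (Christoffel u s l j) x - pd l (Christoffel u s k j) x
      + ∑ p, Christoffel u s k p x * Christoffel u p l j x
      - ∑ p, Christoffel u s l p x * Christoffel u p k j x)

/-- Ricci tensor `Ric_{ij} = ∂_k Γ^k_{ij} − ∂_j Γ^k_{ik} + Γ^k_{kp} Γ^p_{ij} − Γ^k_{jp} Γ^p_{ik}`. -/
def Ricci (u : (Fin n → ℝ) → ℝ) (i j : Fin n) : (Fin n → ℝ) → ℝ :=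
  fun x => (∑ k, pd k (Christoffel u k i j) x) - (∑ k, pd j (Christoffel u k i k) x)
    + (∑ k, ∑ p, Christoffel u k k p x * Christoffel u p i j x)
    - (∑ k, ∑ p, Christoffel u k j p x * Christoffel u p i k x)

/-- Scalar curvature `s = g^{ij} Ric_{ij}`. -/
def scalarCurv (u : (Fin n → ℝ) → ℝ) : (Fin n → ℝ) → ℝ :=
  fun x => ∑ i, ∑ j, ginv u x i j * Ricci u i j x

/-- Covariant Hessian `(∇²φ)_{ij} = φ_{,ij} − Γ^k_{ij} φ_{,k}`. -/
def covHess (u φ : (Fin n → ℝ) → ℝ) (i j : Fin n) : (Fin n → ℝ) → ℝ :=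
  fun x => pd i (pd j φ) x - ∑ k, Christoffel u k i j x * pd k φ x

/-- Laplace–Beltrami operator `Δφ = g^{ij} (∇²φ)_{ij}`. -/
def laplacian (u φ : (Fin n → ℝ) → ℝ) : (Fin n → ℝ) → ℝ :=
  fun x => ∑ i, ∑ j, ginv u x i j * covHess u φ i j x

/-- Weighted (drift) Laplacian `Δ_φ F = ΔF − g^{ij} φ_{,i} F_{,j}`. -/
def driftLap (u φ F : (Fin n → ℝ) → ℝ) : (Fin n → ℝ) → ℝ :=
  fun x => laplacian u F x - ∑ i, ∑ j, ginv u x i j * pd i φ x * pd j F x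

/-- Bakry–Émery Ricci tensor `(Ric_φ)_{ij} = Ric_{ij} + (∇²φ)_{ij}`. -/
def ricciPhi (u φ : (Fin n → ℝ) → ℝ) (i j : Fin n) : (Fin n → ℝ) → ℝ :=
  fun x => Ricci u i j x + covHess u φ i j x

/-- Pointwise squared `g`-norm of the third derivative tensor:
`|u_{,ijk}|²_g = g^{ip} g^{jq} g^{kr} u_{,ijk} u_{,pqr}`. -/
def norm3 (u : (Fin n → ℝ) → ℝ) : (Fin n → ℝ) → ℝ :=
  fun x => ∑ i, ∑ j, ∑ k, ∑ p, ∑ q, ∑ r,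
    ginv u x i p * ginv u x j q * ginv u x k r * d3 u i j k x * d3 u p q r x

/-- The canonical weight function `φ = (1/2)(u_{,p} ξ^p + v_q x^q)`. -/
def weight (u : (Fin n → ℝ) → ℝ) (ξ v : Fin n → ℝ) : (Fin n → ℝ) → ℝ :=
  fun x => (1/2) * ((∑ p, pd p u x * ξ p) + ∑ q, v q * x q)

/-- `u` solves the weighted Monge–Ampère equation
`log det g(x) = −v_p x^p + u_{,q}(x) ξ^q + c` on `N`. -/
def MAeq (u : (Fin n → ℝ) → ℝ) (N : Set (Fin n → ℝ)) (v ξ : Fin n → ℝ) (c : ℝ) : Prop :=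
  ∀ x ∈ N, Real.log (hessian u x).det = -(∑ p, v p * x p) + (∑ q, pd q u x * ξ q) + c

/-- Covariant derivative of the third derivative tensor:
`(∇T)_{lijk} = u_{,ijkl} − Γ^s_{li} u_{,sjk} − Γ^s_{lj} u_{,isk} − Γ^s_{lk} u_{,ijs}`. -/
def covT (u : (Fin n → ℝ) → ℝ) (l i j k : Fin n) : (Fin n → ℝ) → ℝ :=
  fun x => d4 u i j k l x - (∑ s, Christoffel u s l i x * d3 u s j k x)
    - (∑ s, Christoffel u s l j x * d3 u i s k x)
    - (∑ s, Christoffel u s l k x * d3 u i j s x)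

/-- Completeness of the Hessian metric `g = D²u` on `N`: every C¹ curve
`γ : [0,1) → N` that eventually leaves every compact subset of `N`
has infinite `g`-length. -/
def HessComplete (u : (Fin n → ℝ) → ℝ) (N : Set (Fin n → ℝ)) : Prop :=
  ∀ γ : ℝ → (Fin n → ℝ),
    ContDiffOn ℝ 1 γ (Set.Ico (0:ℝ) 1) →
    (∀ t ∈ Set.Ico (0:ℝ) 1, γ t ∈ N) →
    (∀ K : Set (Fin n → ℝ), IsCompact K → K ⊆ N →
      ∃ tK ∈ Set.Ico (0:ℝ) 1, ∀ t ∈ Set.Ioo tK 1, γ t ∉ K) →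
    ∫⁻ t in Set.Ioo (0:ℝ) 1,
      ENNReal.ofReal (Real.sqrt (∑ i, ∑ j,
        hessian u (γ t) i j * deriv γ t i * deriv γ t j)) = ⊤


def Sm (N : Set (Fin n → ℝ)) (f : (Fin n → ℝ) → ℝ) : Prop :=
  ContDiffOn ℝ ((⊤:ℕ∞) : WithTop ℕ∞) f N

lemma pd_congr_nhds {f g : (Fin n → ℝ) → ℝ} {x} (h : f =ᶠ[nhds x] g) (i : Fin n) :
    pd i f x = pd i g x := by
  unfold pd; rw [Filter.EventuallyEq.fderiv_eq h]

lemma pd_congrOn {N : Set (Fin n → ℝ)} (hN : IsOpen N) {f g : (Fin n → ℝ) → ℝ}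
    (h : ∀ y ∈ N, f y = g y) {x} (hx : x ∈ N) (i : Fin n) : pd i f x = pd i g x :=
  pd_congr_nhds (Filter.eventually_iff_exists_mem.2 ⟨N, hN.mem_nhds hx, h⟩) i

lemma Sm.fderivSm {N : Set (Fin n → ℝ)} (hN : IsOpen N) {f} (hf : Sm N f) :
    ContDiffOn ℝ ((⊤:ℕ∞) : WithTop ℕ∞) (fderiv ℝ f) N :=
  hf.fderiv_of_isOpen hN (by simp)

lemma Sm.pd {N : Set (Fin n → ℝ)} (hN : IsOpen N) {f} (hf : Sm N f) (i : Fin n) :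
    Sm N (pd i f) :=
  (hf.fderivSm hN).clm_apply contDiffOn_const

lemma Sm.diffAt {N : Set (Fin n → ℝ)} (hN : IsOpen N) {f} (hf : Sm N f) {x} (hx : x ∈ N) :
    DifferentiableAt ℝ f x :=
  (hf.contDiffAt (hN.mem_nhds hx)).differentiableAt (by simp)

lemma pd_add {f g : (Fin n → ℝ) → ℝ} {x} (i : Fin n)
    (hf : DifferentiableAt ℝ f x) (hg : DifferentiableAt ℝ g x) :
    pd i (fun y => f y + g y) x = pd i f x + pd i g x := by
  unfold pd; rw [fderiv_fun_add hf hg]; simp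

lemma pd_sub {f g : (Fin n → ℝ) → ℝ} {x} (i : Fin n)
    (hf : DifferentiableAt ℝ f x) (hg : DifferentiableAt ℝ g x) :
    pd i (fun y => f y - g y) x = pd i f x - pd i g x := by
  unfold pd; rw [fderiv_fun_sub hf hg]; simp

lemma pd_mul {f g : (Fin n → ℝ) → ℝ} {x} (i : Fin n)
    (hf : DifferentiableAt ℝ f x) (hg : DifferentiableAt ℝ g x) :
    pd i (fun y => f y * g y) x = pd i f x * g x + f x * pd i g x := by
  unfold pd; rw [fderiv_fun_mul hf hg]; simp; ring

lemma pd_const {x} (i : Fin n) (c : ℝ) : pd i (fun _ => c) x = 0 := by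
  unfold pd; rw [fderiv_const_apply]; simp

lemma pd_const_mul {f : (Fin n → ℝ) → ℝ} {x} (i : Fin n) (c : ℝ)
    (hf : DifferentiableAt ℝ f x) :
    pd i (fun y => c * f y) x = c * pd i f x := by
  unfold pd; rw [fderiv_const_mul hf]; simp

lemma pd_sum {ι : Type*} {s : Finset ι} {A : ι → (Fin n → ℝ) → ℝ} {x} (i : Fin n)
    (hA : ∀ a ∈ s, DifferentiableAt ℝ (A a) x) :
    pd i (fun y => ∑ a ∈ s, A a y) x = ∑ a ∈ s, pd i (A a) x := by
  unfold pd; rw [fderiv_fun_sum hA]; simp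

lemma pd_coord {x : Fin n → ℝ} (i q : Fin n) :
    pd i (fun y => y q) x = if q = i then 1 else 0 := by
  have : (fun y : Fin n → ℝ => y q) = (ContinuousLinearMap.proj (R := ℝ)
      (φ := fun _ : Fin n => ℝ) q) := rfl
  unfold pd; rw [this, ContinuousLinearMap.fderiv]; simp [Pi.single_apply]

lemma pd_comm {N : Set (Fin n → ℝ)} (hN : IsOpen N) {f} (hf : Sm N f) {x}
    (hx : x ∈ N) (i j : Fin n) :
    pd i (pd j f) x = pd j (pd i f) x := by
  have hct : ContDiffAt ℝ ((⊤:ℕ∞) : WithTop ℕ∞) f x := hf.contDiffAt (hN.mem_nhds hx)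
  have hsym := hct.isSymmSndFDerivAt (by simp only [minSmoothness_of_isRCLikeNormedField]; exact WithTop.coe_le_coe.2 (le_top : (2:ℕ∞) ≤ ⊤))
  have hd : DifferentiableAt ℝ (fderiv ℝ f) x :=
    ((hf.fderivSm hN).contDiffAt (hN.mem_nhds hx)).differentiableAt (by simp)
  have key : ∀ a b : Fin n, pd a (pd b f) x
      = fderiv ℝ (fderiv ℝ f) x (Pi.single a 1) (Pi.single b 1) := by
    intro a b
    have h1 : fderiv ℝ (fun y => fderiv ℝ f y (Pi.single b 1)) x
        = (fderiv ℝ (fderiv ℝ f) x).flip (Pi.single b 1) := by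
      rw [fderiv_clm_apply hd (differentiableAt_const _)]; simp
    show fderiv ℝ (fun y => fderiv ℝ f y (Pi.single b 1)) x (Pi.single a 1) = _
    rw [h1]; rfl
  rw [key i j, key j i, hsym.eq]

section MatrixCalc

attribute [local instance] Matrix.linftyOpNormedAddCommGroup Matrix.linftyOpNormedRing
  Matrix.linftyOpNormedAlgebra

variable {N : Set (Fin n → ℝ)} {u : (Fin n → ℝ) → ℝ}

instance : CompleteSpace (Matrix (Fin n) (Fin n) ℝ) := FiniteDimensional.complete ℝ _

/-- `Matrix.of` as a continuous linear map. -/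
def toMat : ((Fin n) → (Fin n) → ℝ) →L[ℝ] Matrix (Fin n) (Fin n) ℝ :=
  LinearMap.toContinuousLinearMap
    { toFun := fun M => Matrix.of M, map_add' := fun _ _ => rfl, map_smul' := fun _ _ => rfl }

/-- Entry extraction as a continuous linear map. -/
def ent (k l : Fin n) : Matrix (Fin n) (Fin n) ℝ →L[ℝ] ℝ :=
  LinearMap.toContinuousLinearMap
    { toFun := fun M => M k l, map_add' := fun _ _ => rfl, map_smul' := fun _ _ => rfl }

lemma hessian_hasFDerivAt (hN : IsOpen N) (hu : Sm N u) {x} (hx : x ∈ N) :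
    HasFDerivAt (fun y => hessian u y)
      (toMat.comp (ContinuousLinearMap.pi fun a => ContinuousLinearMap.pi fun b =>
        fderiv ℝ (pd a (pd b u)) x)) x := by
  have hP : HasFDerivAt (fun y (a : Fin n) (b : Fin n) => pd a (pd b u) y)
      (ContinuousLinearMap.pi fun a => ContinuousLinearMap.pi fun b =>
        fderiv ℝ (pd a (pd b u)) x) x := by
    refine hasFDerivAt_pi.2 fun a => hasFDerivAt_pi.2 fun b => ?_
    exact (((hu.pd hN b).pd hN a).diffAt hN hx).hasFDerivAt
  exact toMat.hasFDerivAt.comp x hP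

lemma ginv_entry_hasFDerivAt (hN : IsOpen N) (hu : Sm N u) {x} (hx : x ∈ N)
    (hdet : IsUnit (hessian u x).det) (k l : Fin n) :
    HasFDerivAt (fun y => ginv u y k l)
      ((ent k l).comp ((-(ContinuousLinearMap.mulLeftRight ℝ _ (ginv u x) (ginv u x))).comp
        (toMat.comp (ContinuousLinearMap.pi fun a => ContinuousLinearMap.pi fun b =>
          fderiv ℝ (pd a (pd b u)) x)))) x := by
  obtain ⟨w, hw⟩ := (Matrix.isUnit_iff_isUnit_det _).2 hdet
  have hw1 : (↑w⁻¹ : Matrix (Fin n) (Fin n) ℝ) = ginv u x := by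
    rw [Matrix.coe_units_inv, hw]; rfl
  have hinv : HasFDerivAt Ring.inverse
      (-(ContinuousLinearMap.mulLeftRight ℝ _ (ginv u x)) (ginv u x)) (hessian u x) := by
    have := hasFDerivAt_ringInverse (𝕜 := ℝ) w
    rwa [hw1, hw] at this
  have hcomp := hinv.comp x (hessian_hasFDerivAt hN hu hx)
  have heq : (fun y => ginv u y k l) = fun y => (Ring.inverse (hessian u y)) k l := by
    funext y; rw [← Matrix.nonsing_inv_eq_ringInverse]; rfl
  rw [heq]
  exact (ent k l).hasFDerivAt.comp x hcomp

lemma ginv_entry_smoothOn (hN : IsOpen N) (hu : Sm N u)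
    (hdet : ∀ x ∈ N, IsUnit (hessian u x).det) (k l : Fin n) :
    Sm N (fun y => ginv u y k l) := by
  intro x hx
  obtain ⟨w, hw⟩ := (Matrix.isUnit_iff_isUnit_det _).2 (hdet x hx)
  have h1 : ContDiffAt ℝ ((⊤:ℕ∞) : WithTop ℕ∞) (fun y (a : Fin n) (b : Fin n) =>
      pd a (pd b u) y) x := by
    refine contDiffAt_pi.2 fun a => contDiffAt_pi.2 fun b => ?_
    exact ((hu.pd hN b).pd hN a).contDiffAt (hN.mem_nhds hx)
  have h2 : ContDiffAt ℝ ((⊤:ℕ∞) : WithTop ℕ∞) (fun y => hessian u y) x :=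
    toMat.contDiff.contDiffAt.comp x h1
  have h3 : ContDiffAt ℝ ((⊤:ℕ∞) : WithTop ℕ∞) (fun y => Ring.inverse (hessian u y)) x := by
    have := contDiffAt_ringInverse ℝ (n := ((⊤:ℕ∞) : WithTop ℕ∞)) w
    rw [hw] at this
    exact this.comp x h2
  have h4 : ContDiffAt ℝ ((⊤:ℕ∞) : WithTop ℕ∞) (fun y => Ring.inverse (hessian u y) k l) x :=
    (ent k l).contDiff.contDiffAt.comp x h3
  have heq : (fun y => ginv u y k l) = fun y => (Ring.inverse (hessian u y)) k l := by
    funext y; rw [← Matrix.nonsing_inv_eq_ringInverse]; rfl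
  rw [heq]
  exact h4.contDiffWithinAt

/-- The derivative of the inverse-metric entries. -/
lemma pd_ginv (hN : IsOpen N) (hu : Sm N u) {x} (hx : x ∈ N)
    (hdet : IsUnit (hessian u x).det) (m k l : Fin n) :
    pd m (fun y => ginv u y k l) x
      = -∑ a, ∑ b, ginv u x k a * d3 u m a b x * ginv u x b l := by
  have h := (ginv_entry_hasFDerivAt hN hu hx hdet k l).fderiv
  unfold pd
  rw [h]
  have : ∀ (H : (Fin n → ℝ)),
      ((ent k l).comp ((-(ContinuousLinearMap.mulLeftRight ℝ _ (ginv u x) (ginv u x))).comp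
        (toMat.comp (ContinuousLinearMap.pi fun a => ContinuousLinearMap.pi fun b =>
          fderiv ℝ (pd a (pd b u)) x)))) H
      = -((ginv u x) * (Matrix.of fun a b => fderiv ℝ (pd a (pd b u)) x H) * (ginv u x)) k l := by
    intro H; rfl
  rw [this]
  rw [Matrix.mul_apply]
  rw [neg_eq_iff_eq_neg, neg_neg]
  rw [Finset.sum_comm]
  refine Finset.sum_congr rfl fun b _ => ?_
  rw [Matrix.mul_apply, Finset.sum_mul]
  refine Finset.sum_congr rfl fun a _ => ?_
  rfl

end MatrixCalc

section Sym
variable {N : Set (Fin n → ℝ)} {u : (Fin n → ℝ) → ℝ} {x : Fin n → ℝ}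

lemma hessian_symm (hN : IsOpen N) (hu : Sm N u) (hx : x ∈ N) (a b : Fin n) :
    hessian u x a b = hessian u x b a := pd_comm hN hu hx a b

lemma d3_swap12 (hN : IsOpen N) (hu : Sm N u) (hx : x ∈ N) (i j k : Fin n) :
    d3 u i j k x = d3 u j i k x := pd_comm hN (hu.pd hN k) hx i j

lemma d3_swap23 (hN : IsOpen N) (hu : Sm N u) (hx : x ∈ N) (i j k : Fin n) :
    d3 u i j k x = d3 u i k j x := pd_congrOn hN (fun y hy => pd_comm hN hu hy j k) hx i

lemma d3_rot (hN : IsOpen N) (hu : Sm N u) (hx : x ∈ N) (i j k : Fin n) :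
    d3 u i j k x = d3 u j k i x := by
  rw [d3_swap12 hN hu hx, d3_swap23 hN hu hx]

lemma d4_swap12 (hN : IsOpen N) (hu : Sm N u) (hx : x ∈ N) (i j k l : Fin n) :
    d4 u i j k l x = d4 u j i k l x := pd_comm hN ((hu.pd hN l).pd hN k) hx i j

lemma d4_swap23 (hN : IsOpen N) (hu : Sm N u) (hx : x ∈ N) (i j k l : Fin n) :
    d4 u i j k l x = d4 u i k j l x :=
  pd_congrOn hN (fun y hy => pd_comm hN (hu.pd hN l) hy j k) hx i

lemma d4_swap34 (hN : IsOpen N) (hu : Sm N u) (hx : x ∈ N) (i j k l : Fin n) :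
    d4 u i j k l x = d4 u i j l k x := by
  refine pd_congrOn hN (fun y hy => ?_) hx i
  exact pd_congrOn hN (fun z hz => pd_comm hN hu hz k l) hy j

lemma smD3 (hN : IsOpen N) (hu : Sm N u) (a b c : Fin n) : Sm N (d3 u a b c) :=
  ((hu.pd hN c).pd hN b).pd hN a

end Sym

section Det
attribute [local instance] Matrix.linftyOpNormedAddCommGroup Matrix.linftyOpNormedRing
  Matrix.linftyOpNormedAlgebra

variable {N : Set (Fin n → ℝ)} {u : (Fin n → ℝ) → ℝ} {x : Fin n → ℝ}

lemma pd_det (hN : IsOpen N) (hu : Sm N u) (hx : x ∈ N)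
    (hdet : IsUnit (hessian u x).det) (m : Fin n) :
    pd m (fun y => (hessian u y).det) x
      = (hessian u x).det * ∑ a, ∑ k, ginv u x a k * d3 u m k a x := by
  have hdA : ∀ a b : Fin n, DifferentiableAt ℝ (pd a (pd b u)) x :=
    fun a b => ((hu.pd hN b).pd hN a).diffAt hN hx
  have h0 : (fun y => (hessian u y).det)
      = fun y => ∑ σ : Equiv.Perm (Fin n), ((Equiv.Perm.sign σ : ℤ) : ℝ)
          * ∏ a, pd (σ a) (pd a u) y := by
    funext y; rw [Matrix.det_apply']; rfl
  rw [h0]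
  have hprod : ∀ σ : Equiv.Perm (Fin n),
      pd m (fun y => ∏ a, pd (σ a) (pd a u) y) x
        = ∑ a, (∏ b ∈ Finset.univ.erase a, hessian u x (σ b) b) * d3 u m (σ a) a x := by
    intro σ
    have h := HasFDerivAt.finset_prod (u := Finset.univ) (x := x)
      (g := fun a y => pd (σ a) (pd a u) y)
      (g' := fun a => fderiv ℝ (pd (σ a) (pd a u)) x)
      (fun a _ => (hdA (σ a) a).hasFDerivAt)
    show fderiv ℝ (fun y => ∏ a : Fin n, pd (σ a) (pd a u) y) x (Pi.single m 1) = _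
    rw [show fderiv ℝ (fun y => ∏ a : Fin n, pd (σ a) (pd a u) y) x
        = ∑ i : Fin n, (∏ j ∈ Finset.univ.erase i, pd (σ j) (pd j u) x)
            • fderiv ℝ (pd (σ i) (pd i u)) x from h.fderiv]
    simp only [ContinuousLinearMap.coe_sum', Finset.sum_apply, ContinuousLinearMap.coe_smul',
      Pi.smul_apply, smul_eq_mul]
    rfl
  have hdiffprod : ∀ σ : Equiv.Perm (Fin n),
      DifferentiableAt ℝ (fun y => ∏ a : Fin n, pd (σ a) (pd a u) y) x := by
    intro σ
    exact (HasFDerivAt.finset_prod (u := Finset.univ) (x := x)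
      (g := fun a y => pd (σ a) (pd a u) y)
      (g' := fun a => fderiv ℝ (pd (σ a) (pd a u)) x)
      (fun a _ => (hdA (σ a) a).hasFDerivAt)).differentiableAt
  rw [pd_sum m (fun σ _ => (hdiffprod σ).const_mul _)]
  have h1 : ∀ σ : Equiv.Perm (Fin n),
      pd m (fun y => ((Equiv.Perm.sign σ : ℤ) : ℝ) * ∏ a, pd (σ a) (pd a u) y) x
        = ((Equiv.Perm.sign σ : ℤ) : ℝ)
          * ∑ a, (∏ b ∈ Finset.univ.erase a, hessian u x (σ b) b) * d3 u m (σ a) a x := by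
    intro σ
    rw [pd_const_mul m _ (hdiffprod σ), hprod σ]
  simp only [h1]
  -- swap sums and recognize updateColumn determinants
  have h2 : ∑ σ : Equiv.Perm (Fin n), ((Equiv.Perm.sign σ : ℤ) : ℝ)
        * ∑ a, (∏ b ∈ Finset.univ.erase a, hessian u x (σ b) b) * d3 u m (σ a) a x
      = ∑ a, ((hessian u x).updateCol a (fun r => d3 u m r a x)).det := by
    simp only [Finset.mul_sum]
    rw [Finset.sum_comm]
    refine Finset.sum_congr rfl fun a _ => ?_
    rw [Matrix.det_apply']
    refine Finset.sum_congr rfl fun σ _ => ?_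
    have h3 : ∏ b, ((hessian u x).updateCol a fun r => d3 u m r a x) (σ b) b
        = d3 u m (σ a) a x * ∏ b ∈ Finset.univ.erase a, hessian u x (σ b) b := by
      rw [← Finset.mul_prod_erase Finset.univ _ (Finset.mem_univ a)]
      rw [Matrix.updateCol_apply, if_pos rfl]
      congr 1
      refine Finset.prod_congr rfl fun b hb => ?_
      rw [Matrix.updateCol_apply, if_neg (Finset.ne_of_mem_erase hb)]
    rw [h3]; ring
  rw [h2]
  have h4 : ∀ a : Fin n, ((hessian u x).updateCol a (fun r => d3 u m r a x)).det
      = ∑ k, (hessian u x).det * ginv u x a k * d3 u m k a x := by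
    intro a
    rw [← Matrix.cramer_apply, Matrix.cramer_eq_adjugate_mulVec]
    have hadj : ∀ k : Fin n, (hessian u x).adjugate a k
        = (hessian u x).det * ginv u x a k := by
      intro k
      have : ginv u x = Ring.inverse (hessian u x).det • (hessian u x).adjugate :=
        Matrix.inv_def _
      rw [this]
      simp only [Matrix.smul_apply, smul_eq_mul, Ring.inverse_eq_inv']
      rw [← mul_assoc, mul_inv_cancel₀ (IsUnit.ne_zero hdet), one_mul]
    simp only [Matrix.mulVec, dotProduct]
    exact Finset.sum_congr rfl fun k _ => by rw [hadj k]
  simp only [h4, Finset.mul_sum]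
  refine Finset.sum_congr rfl fun a _ => Finset.sum_congr rfl fun k _ => by ring

end Det

section MoreRules
variable {f g : (Fin n → ℝ) → ℝ} {x : Fin n → ℝ}

lemma pd_neg (i : Fin n) (hf : DifferentiableAt ℝ f x) :
    pd i (fun y => -f y) x = -pd i f x := by
  unfold pd; rw [fderiv_fun_neg]; simp

lemma pd_mul_const (i : Fin n) (c : ℝ) (hf : DifferentiableAt ℝ f x) :
    pd i (fun y => f y * c) x = pd i f x * c := by
  unfold pd; rw [fderiv_mul_const hf]; simp [mul_comm]

lemma diff_coord (q : Fin n) :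
    DifferentiableAt ℝ (fun y : Fin n → ℝ => y q) x :=
  (ContinuousLinearMap.proj (R := ℝ) (φ := fun _ : Fin n => ℝ) q).differentiableAt

lemma pd_linear_combo (m : Fin n) (v : Fin n → ℝ) :
    pd m (fun y : Fin n → ℝ => ∑ p, v p * y p) x = v m := by
  rw [pd_sum m (fun p _ => (diff_coord p).const_mul _)]
  have : ∀ p : Fin n, pd m (fun y : Fin n → ℝ => v p * y p) x
      = v p * (if p = m then 1 else 0) := by
    intro p; rw [pd_const_mul m (v p) (diff_coord p), pd_coord]
  simp only [this, mul_ite, mul_one, mul_zero, Finset.sum_ite_eq', Finset.mem_univ, if_true]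

end MoreRules

section Keys
variable {N : Set (Fin n → ℝ)} {u : (Fin n → ℝ) → ℝ} {x : Fin n → ℝ}
  {v ξ : Fin n → ℝ} {c : ℝ}

lemma key1 (hN : IsOpen N) (hu : Sm N u) (hpos : ∀ y ∈ N, (hessian u y).PosDef)
    (hMA : MAeq u N v ξ c) (hx : x ∈ N) (m : Fin n) :
    ∑ a, ∑ k, ginv u x a k * d3 u m k a x
      = -(v m) + ∑ q, hessian u x m q * ξ q := by
  have hdet : ∀ y ∈ N, IsUnit (hessian u y).det :=
    fun y hy => isUnit_iff_ne_zero.2 (ne_of_gt (hpos y hy).det_pos)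
  set w : (Fin n → ℝ) → ℝ :=
    fun y => -(∑ p, v p * y p) + (∑ q, pd q u y * ξ q) + c with hwdef
  have hexp : ∀ y ∈ N, (hessian u y).det = Real.exp (w y) := by
    intro y hy
    rw [← Real.exp_log (hpos y hy).det_pos, hMA y hy]
  have hd1 : DifferentiableAt ℝ (fun y : Fin n → ℝ => ∑ p, v p * y p) x :=
    DifferentiableAt.fun_sum fun p _ => (diff_coord p).const_mul _
  have hd2 : DifferentiableAt ℝ (fun y => ∑ q, pd q u y * ξ q) x :=
    DifferentiableAt.fun_sum fun q _ => ((hu.pd hN q).diffAt hN hx).mul_const _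
  have hdw : DifferentiableAt ℝ w x := ((hd1.neg.add hd2).add_const c)
  have hpdw : pd m w x = -(v m) + ∑ q, hessian u x m q * ξ q := by
    have e1 : pd m w x = pd m (fun y => -(∑ p, v p * y p) + (∑ q, pd q u y * ξ q)) x
        + pd m (fun _ => c) x := pd_add m (hd1.fun_neg.fun_add hd2) (differentiableAt_const c)
    rw [e1, pd_const, add_zero,
      pd_add m hd1.fun_neg hd2, pd_neg m hd1, pd_linear_combo,
      pd_sum m (fun q _ => ((hu.pd hN q).diffAt hN hx).mul_const _)]
    congr 1
    refine Finset.sum_congr rfl fun q _ => ?_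
    rw [pd_mul_const m (ξ q) ((hu.pd hN q).diffAt hN hx)]
    rfl
  have hL : pd m (fun y => (hessian u y).det) x = pd m (fun y => Real.exp (w y)) x :=
    pd_congrOn hN hexp hx m
  rw [pd_det hN hu hx (hdet x hx) m] at hL
  have hR : pd m (fun y => Real.exp (w y)) x = Real.exp (w x) * pd m w x := by
    unfold pd; rw [fderiv_exp hdw]; simp
  rw [hR, ← hexp x hx, hpdw] at hL
  exact mul_left_cancel₀ (IsUnit.ne_zero (hdet x hx)) hL

lemma key2 (hN : IsOpen N) (hu : Sm N u) (hpos : ∀ y ∈ N, (hessian u y).PosDef)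
    (hMA : MAeq u N v ξ c) (hx : x ∈ N) (m j : Fin n) :
    ∑ a, ∑ k, ginv u x a k * d4 u j m k a x
      = (∑ q, d3 u j m q x * ξ q)
        + ∑ a, ∑ k, ∑ p, ∑ d, ginv u x a p * d3 u j p d x * ginv u x d k * d3 u m k a x := by
  have hdet : ∀ y ∈ N, IsUnit (hessian u y).det :=
    fun y hy => isUnit_iff_ne_zero.2 (ne_of_gt (hpos y hy).det_pos)
  have hGd : ∀ (a k : Fin n), DifferentiableAt ℝ (fun y => ginv u y a k) x :=
    fun a k => (ginv_entry_smoothOn hN hu hdet a k).diffAt hN hx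
  have hTd : ∀ (a b cc : Fin n), DifferentiableAt ℝ (d3 u a b cc) x :=
    fun a b cc => (smD3 hN hu a b cc).diffAt hN hx
  -- the identity from key1, as functions on N
  have heq : ∀ y ∈ N, (fun y => ∑ a, ∑ k, ginv u y a k * d3 u m k a y) y
      = (fun y => -(v m) + ∑ q, pd m (pd q u) y * ξ q) y := by
    intro y hy
    exact key1 hN hu hpos hMA hy m
  have hstep := pd_congrOn hN heq hx j
  -- compute the right side
  have hdR : ∀ q : Fin n, DifferentiableAt ℝ (fun y => pd m (pd q u) y * ξ q) x :=
    fun q => (((hu.pd hN q).pd hN m).diffAt hN hx).mul_const _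
  have hR : pd j (fun y => -(v m) + ∑ q, pd m (pd q u) y * ξ q) x
      = ∑ q, d3 u j m q x * ξ q := by
    rw [pd_add j (differentiableAt_const _) (DifferentiableAt.fun_sum fun q _ => hdR q),
      pd_const, zero_add, pd_sum j (fun q _ => hdR q)]
    refine Finset.sum_congr rfl fun q _ => ?_
    rw [pd_mul_const j (ξ q) (((hu.pd hN q).pd hN m).diffAt hN hx)]
    rfl
  -- compute the left side
  have hdin : ∀ a k : Fin n, DifferentiableAt ℝ (fun y => ginv u y a k * d3 u m k a y) x :=
    fun a k => (hGd a k).mul (hTd m k a)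
  have hL : pd j (fun y => ∑ a, ∑ k, ginv u y a k * d3 u m k a y) x
      = ∑ a, ∑ k, ((-∑ p, ∑ d, ginv u x a p * d3 u j p d x * ginv u x d k) * d3 u m k a x
          + ginv u x a k * d4 u j m k a x) := by
    rw [pd_sum j (fun a _ => DifferentiableAt.fun_sum fun k _ => hdin a k)]
    refine Finset.sum_congr rfl fun a _ => ?_
    rw [pd_sum j (fun k _ => hdin a k)]
    refine Finset.sum_congr rfl fun k _ => ?_
    rw [pd_mul j (hGd a k) (hTd m k a), pd_ginv hN hu hx (hdet x hx) j a k]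
    rfl
  rw [hL, hR] at hstep
  -- rearrange
  have expand : ∀ a k : Fin n,
      ((-∑ p, ∑ d, ginv u x a p * d3 u j p d x * ginv u x d k) * d3 u m k a x
          + ginv u x a k * d4 u j m k a x)
      = ginv u x a k * d4 u j m k a x
          - ∑ p, ∑ d, ginv u x a p * d3 u j p d x * ginv u x d k * d3 u m k a x := by
    intro a k
    rw [neg_mul, Finset.sum_mul]
    have : ∀ p, (∑ d, ginv u x a p * d3 u j p d x * ginv u x d k) * d3 u m k a x
        = ∑ d, ginv u x a p * d3 u j p d x * ginv u x d k * d3 u m k a x := by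
      intro p; rw [Finset.sum_mul]
    simp only [this]
    ring
  simp only [expand, Finset.sum_sub_distrib] at hstep
  linarith [hstep]
end Keys



section SumHelpers
variable {α : Type*} [Fintype α]

lemma sw12of2 (f : α → α → ℝ) : ∑ a, ∑ b, f a b = ∑ b, ∑ a, f a b := Finset.sum_comm

lemma sw12of4 (f : α → α → α → α → ℝ) :
    ∑ a, ∑ b, ∑ c, ∑ d, f a b c d = ∑ b, ∑ a, ∑ c, ∑ d, f a b c d := Finset.sum_comm

lemma sw23of4 (f : α → α → α → α → ℝ) :
    ∑ a, ∑ b, ∑ c, ∑ d, f a b c d = ∑ a, ∑ c, ∑ b, ∑ d, f a b c d :=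
  Finset.sum_congr rfl fun _ _ => Finset.sum_comm

lemma sw34of4 (f : α → α → α → α → ℝ) :
    ∑ a, ∑ b, ∑ c, ∑ d, f a b c d = ∑ a, ∑ b, ∑ d, ∑ c, f a b c d :=
  Finset.sum_congr rfl fun _ _ => Finset.sum_congr rfl fun _ _ => Finset.sum_comm

lemma sw23of3 (f : α → α → α → ℝ) :
    ∑ a, ∑ b, ∑ c, f a b c = ∑ a, ∑ c, ∑ b, f a b c :=
  Finset.sum_congr rfl fun _ _ => Finset.sum_comm

lemma sw12of3 (f : α → α → α → ℝ) :
    ∑ a, ∑ b, ∑ c, f a b c = ∑ b, ∑ a, ∑ c, f a b c := Finset.sum_comm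

lemma const_out (c : ℝ) (f : α → ℝ) : ∑ a, c * f a = c * ∑ a, f a :=
  (Finset.mul_sum _ _ _).symm

end SumHelpers

lemma final_algebra (G H : Matrix (Fin n) (Fin n) ℝ)
    (T : Fin n → Fin n → Fin n → ℝ) (Q : Fin n → Fin n → Fin n → Fin n → ℝ)
    (v ξ : Fin n → ℝ) (i j : Fin n)
    (hT1 : ∀ a b c, T a b c = T b a c)
    (hT2 : ∀ a b c, T a b c = T a c b)
    (hGs : ∀ a b, G a b = G b a)
    (hGH : ∀ a cc, (∑ b, G a b * H b cc) = if a = cc then 1 else 0)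
    (hK1 : ∀ m, (∑ a, ∑ k, G a k * T m k a) = -(v m) + ∑ q, H m q * ξ q)
    (hK2 : (∑ a, ∑ k, G a k * Q j i k a)
        = (∑ q, T j i q * ξ q) + ∑ a, ∑ k, ∑ p, ∑ d, G a p * T j p d * G d k * T i k a)
    (hQ13 : ∀ k l, Q k i j l = Q j i k l) :
    ((∑ k, (1/2) * ∑ l, ((-∑ a, ∑ b, G k a * T k a b * G b l) * T i j l + G k l * Q k i j l))
      - (∑ k, (1/2) * ∑ l, ((-∑ a, ∑ b, G k a * T j a b * G b l) * T i k l + G k l * Q j i k l))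
      + (∑ k, ∑ p, ((1/2) * ∑ l, G k l * T k p l) * ((1/2) * ∑ l, G p l * T i j l))
      - (∑ k, ∑ p, ((1/2) * ∑ l, G k l * T j p l) * ((1/2) * ∑ l, G p l * T i k l)))
    + ((1/2) * ∑ p, T i j p * ξ p
      - ∑ k, ((1/2) * ∑ l, G k l * T i j l) * ((1/2) * ((∑ p, H k p * ξ p) + v k)))
    = (1/4) * ∑ p, ∑ q, ∑ k, ∑ l, G p q * G k l * T i p k * T j q l := by
  have hrot : ∀ a b c, T a b c = T b c a := by
    intro a b c; rw [hT1, hT2]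
  set P : ℝ := ∑ q, T i j q * ξ q with hP
  set V : ℝ := ∑ b, ∑ l, v b * (G b l * T i j l) with hV
  set R4 : ℝ := ∑ a, ∑ k, ∑ p, ∑ d, G a p * T j p d * G d k * T i k a with hR4
  -- K1, rotated
  have hS : ∀ b, (∑ k, ∑ a, G k a * T k a b) = -(v b) + ∑ q, H b q * ξ q := by
    intro b
    rw [← hK1 b]
    exact Finset.sum_congr rfl fun k _ => Finset.sum_congr rfl fun a _ => by
      rw [hrot k a b, hrot a b k, hT2 b k a]
  -- contraction
  have hδ : ∀ l q, (∑ b, G b l * H b q) = if l = q then 1 else 0 := by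
    intro l q
    rw [← hGH l q]
    exact Finset.sum_congr rfl fun b _ => by rw [hGs b l]
  -- the S-weighted sum
  have hSW : (∑ b, ∑ l, (-(v b) + ∑ q, H b q * ξ q) * (G b l * T i j l)) = -V + P := by
    have e3 : ∀ b l, (-(v b) + ∑ q, H b q * ξ q) * (G b l * T i j l)
        = -(v b * (G b l * T i j l)) + (∑ q, H b q * ξ q) * (G b l * T i j l) := by
      intro b l; ring
    simp only [e3, Finset.sum_add_distrib, Finset.sum_neg_distrib]
    congr 1
    have e4 : ∀ b l, (∑ q, H b q * ξ q) * (G b l * T i j l)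
        = ∑ q, G b l * H b q * (ξ q * T i j l) := by
      intro b l; rw [Finset.sum_mul]; exact Finset.sum_congr rfl fun q _ => by ring
    simp only [e4]
    rw [sw12of3 (fun b l q => G b l * H b q * (ξ q * T i j l)),
      sw23of3 (fun l b q => G b l * H b q * (ξ q * T i j l))]
    have e5 : ∀ l q, (∑ b, G b l * H b q * (ξ q * T i j l))
        = (if l = q then 1 else 0) * (ξ q * T i j l) := by
      intro l q
      rw [← Finset.sum_mul, hδ l q]
    simp only [e5, ite_mul, one_mul, zero_mul, Finset.sum_ite_eq, Finset.mem_univ, if_true]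
    rw [hP]
    exact Finset.sum_congr rfl fun l _ => by ring
  -- core facts
  have cA : (∑ k, ∑ l, G k l * Q j i k l) = P + R4 := by
    rw [sw12of2 (fun k l => G k l * Q j i k l)]
    rw [Finset.sum_congr rfl fun l (_ : l ∈ Finset.univ) =>
      Finset.sum_congr rfl fun k (_ : k ∈ Finset.univ) => by rw [hGs k l]]
    rw [hK2]
    congr 1
    exact Finset.sum_congr rfl fun q _ => by rw [hT1 j i q]
  have cA' : (∑ k, ∑ l, G k l * Q k i j l) = P + R4 := by
    rw [← cA]
    exact Finset.sum_congr rfl fun k _ => Finset.sum_congr rfl fun l _ => by rw [hQ13 k l]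
  have cC : (∑ k, ∑ l, (∑ a, ∑ b, G k a * T k a b * G b l) * T i j l) = -V + P := by
    have e1 : ∀ k l, (∑ a, ∑ b, G k a * T k a b * G b l) * T i j l
        = ∑ a, ∑ b, G k a * T k a b * G b l * T i j l := by
      intro k l
      rw [Finset.sum_mul]
      exact Finset.sum_congr rfl fun a _ => by rw [Finset.sum_mul]
    simp only [e1]
    rw [sw34of4 (fun k l a b => G k a * T k a b * G b l * T i j l),
      sw23of4 (fun k l b a => G k a * T k a b * G b l * T i j l),
      sw12of4 (fun k b l a => G k a * T k a b * G b l * T i j l),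
      sw23of4 (fun b k l a => G k a * T k a b * G b l * T i j l)]
    have e2 : ∀ b l, (∑ k, ∑ a, G k a * T k a b * G b l * T i j l)
        = (∑ k, ∑ a, G k a * T k a b) * (G b l * T i j l) := by
      intro b l
      rw [Finset.sum_mul]
      refine Finset.sum_congr rfl fun k _ => ?_
      rw [Finset.sum_mul]
      exact Finset.sum_congr rfl fun a _ => by ring
    simp only [e2, hS]
    exact hSW
  have cD : (∑ k, ∑ l, (∑ a, ∑ b, G k a * T j a b * G b l) * T i k l) = R4 := by
    have e1 : ∀ k l, (∑ a, ∑ b, G k a * T j a b * G b l) * T i k l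
        = ∑ a, ∑ b, G k a * T j a b * G b l * T i k l := by
      intro k l
      rw [Finset.sum_mul]
      exact Finset.sum_congr rfl fun a _ => by rw [Finset.sum_mul]
    simp only [e1]
    rw [hR4]
    exact Finset.sum_congr rfl fun a _ => Finset.sum_congr rfl fun k _ =>
      Finset.sum_congr rfl fun p _ => Finset.sum_congr rfl fun d _ => by
        rw [hT2 i a k]
  have cE : (∑ k, ∑ p, ((1/2 : ℝ) * ∑ l, G k l * T k p l) * ((1/2) * ∑ l, G p l * T i j l))
      = (1/4) * (-V + P) := by
    rw [sw12of2 (fun k p => ((1/2 : ℝ) * ∑ l, G k l * T k p l) * ((1/2) * ∑ l, G p l * T i j l))]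
    have e1 : ∀ p, (∑ k, ((1/2 : ℝ) * ∑ l, G k l * T k p l) * ((1/2) * ∑ l, G p l * T i j l))
        = (1/4) * ∑ l, (-(v p) + ∑ q, H p q * ξ q) * (G p l * T i j l) := by
      intro p
      rw [← Finset.sum_mul, const_out]
      have e2 : (∑ k, ∑ l, G k l * T k p l) = -(v p) + ∑ q, H p q * ξ q := by
        rw [← hS p]
        exact Finset.sum_congr rfl fun k _ => Finset.sum_congr rfl fun l _ => by
          rw [hT2 k p l]
      rw [e2, const_out]
      ring
    rw [Finset.sum_congr rfl fun p (_ : p ∈ Finset.univ) => e1 p, const_out, hSW]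
  have cF : (∑ k, ∑ p, ((1/2 : ℝ) * ∑ l, G k l * T j p l) * ((1/2) * ∑ l, G p l * T i k l))
      = (1/4) * R4 := by
    have e1 : ∀ k p, ((1/2 : ℝ) * ∑ l, G k l * T j p l) * ((1/2) * ∑ l, G p l * T i k l)
        = (1/4) * ∑ a, ∑ b, G k a * T j p a * (G p b * T i k b) := by
      intro k p
      rw [mul_mul_mul_comm, Finset.sum_mul_sum]
      norm_num
    have e1' : ∀ k, (∑ p, ((1/2 : ℝ) * ∑ l, G k l * T j p l) * ((1/2) * ∑ l, G p l * T i k l))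
        = (1/4) * ∑ p, ∑ a, ∑ b, G k a * T j p a * (G p b * T i k b) := by
      intro k
      rw [Finset.sum_congr rfl fun p (_ : p ∈ Finset.univ) => e1 k p, const_out]
    rw [Finset.sum_congr rfl fun k (_ : k ∈ Finset.univ) => e1' k, const_out]
    congr 1
    -- reorder (k,p,a,b) : R4 vars (a',k',p',d') = (k, b, a, p)
    -- so R4 = ∑ k ∑ b ∑ a ∑ p ; transform our (k,p,a,b) to (k,b,a,p) : swap p and b
    rw [sw23of4 (fun k p a b => G k a * T j p a * (G p b * T i k b)),
      sw34of4 (fun k a p b => G k a * T j p a * (G p b * T i k b)),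
      sw23of4 (fun k a b p => G k a * T j p a * (G p b * T i k b)), hR4]
    -- now nesting (k,b,a,p) with term  G k a * T j p a * (G p b * T i k b)
    exact Finset.sum_congr rfl fun k _ => Finset.sum_congr rfl fun b _ =>
      Finset.sum_congr rfl fun a _ => Finset.sum_congr rfl fun p _ => by
        rw [hT2 j a p, hT2 i b k]; ring
  have cG : (∑ k, ((1/2 : ℝ) * ∑ l, G k l * T i j l)
        * ((1/2) * ((∑ p, H k p * ξ p) + v k))) = (1/4) * (P + V) := by
    have e1 : ∀ k, ((1/2 : ℝ) * ∑ l, G k l * T i j l)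
        * ((1/2) * ((∑ p, H k p * ξ p) + v k))
        = (1/4) * ((∑ l, G k l * T i j l) * (∑ p, H k p * ξ p)
            + (∑ l, G k l * T i j l) * v k) := by
      intro k; ring
    simp only [e1]
    rw [const_out]
    congr 1
    rw [Finset.sum_add_distrib]
    congr 1
    · -- ∑ k (∑ l X l) * (∑ p Y p) = P
      have e2 : ∀ k, (∑ l, G k l * T i j l) * (∑ p, H k p * ξ p)
          = ∑ l, ∑ p, G k l * H k p * (T i j l * ξ p) := by
        intro k
        rw [Finset.sum_mul_sum]
        exact Finset.sum_congr rfl fun l _ => Finset.sum_congr rfl fun p _ => by ring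
      simp only [e2]
      rw [sw12of3 (fun k l p => G k l * H k p * (T i j l * ξ p)),
        sw23of3 (fun l k p => G k l * H k p * (T i j l * ξ p))]
      have e3 : ∀ l p, (∑ k, G k l * H k p * (T i j l * ξ p))
          = (if l = p then 1 else 0) * (T i j l * ξ p) := by
        intro l p
        rw [← Finset.sum_mul, hδ l p]
      simp only [e3, ite_mul, one_mul, zero_mul, Finset.sum_ite_eq, Finset.mem_univ, if_true]
      rfl
    · -- ∑ k (∑ l X l) * v k = V
      have e4 : ∀ k, (∑ l, G k l * T i j l) * v k
          = ∑ l, v k * (G k l * T i j l) := by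
        intro k
        rw [Finset.sum_mul]
        exact Finset.sum_congr rfl fun l _ => by ring
      simp only [e4]
      rfl
  have cH : (∑ p, ∑ q, ∑ k, ∑ l, G p q * G k l * T i p k * T j q l) = R4 := by
    rw [sw23of4 (fun p q k l => G p q * G k l * T i p k * T j q l),
      sw12of4 (fun p k q l => G p q * G k l * T i p k * T j q l),
      sw34of4 (fun k p q l => G p q * G k l * T i p k * T j q l), hR4]
    -- nesting now (k,p,l,q), term G p q * G k l * T i p k * T j q l ;
    -- alpha (a,k',p',d') := (k,p,l,q)
    exact Finset.sum_congr rfl fun k _ => Finset.sum_congr rfl fun p _ =>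
      Finset.sum_congr rfl fun l _ => Finset.sum_congr rfl fun q _ => by
        rw [hGs p q, hT2 j q l]; ring
  -- Term1 and Term2 decompositions
  have t1 : (∑ k, (1/2 : ℝ) * ∑ l, ((-∑ a, ∑ b, G k a * T k a b * G b l) * T i j l
        + G k l * Q k i j l))
      = (1/2) * (-(-V + P) + (P + R4)) := by
    rw [const_out]
    congr 1
    simp only [neg_mul, Finset.sum_add_distrib, Finset.sum_neg_distrib]
    rw [cC, cA']
  have t2 : (∑ k, (1/2 : ℝ) * ∑ l, ((-∑ a, ∑ b, G k a * T j a b * G b l) * T i k l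
        + G k l * Q j i k l))
      = (1/2) * (-R4 + (P + R4)) := by
    rw [const_out]
    congr 1
    simp only [neg_mul, Finset.sum_add_distrib, Finset.sum_neg_distrib]
    rw [cD, cA]
  rw [t1, t2, cE, cF, cG, cH]
  ring

section Bridge
variable {N : Set (Fin n → ℝ)} {u : (Fin n → ℝ) → ℝ} {x : Fin n → ℝ}
  {v ξ : Fin n → ℝ} {c : ℝ}

lemma christoffel_at (hN : IsOpen N) (hu : Sm N u) (hx : x ∈ N) (k i j : Fin n) :
    Christoffel u k i j x = (1/2) * ∑ l, ginv u x k l * d3 u i j l x := by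
  show (1/2) * ∑ l, ginv u x k l * (d3 u i j l x + d3 u j i l x - d3 u l i j x) = _
  congr 1
  refine Finset.sum_congr rfl fun l _ => ?_
  rw [show d3 u j i l x = d3 u i j l x from (d3_swap12 hN hu hx i j l).symm,
    show d3 u l i j x = d3 u i j l x from d3_rot hN hu hx l i j]
  ring

lemma pd_christoffel (hN : IsOpen N) (hu : Sm N u)
    (hdet : ∀ y ∈ N, IsUnit (hessian u y).det) (hx : x ∈ N) (m k i j : Fin n) :
    pd m (Christoffel u k i j) x
      = (1/2) * ∑ l, ((-∑ a, ∑ b, ginv u x k a * d3 u m a b x * ginv u x b l)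
          * d3 u i j l x + ginv u x k l * d4 u m i j l x) := by
  have hGd : ∀ a b : Fin n, DifferentiableAt ℝ (fun y => ginv u y a b) x :=
    fun a b => (ginv_entry_smoothOn hN hu hdet a b).diffAt hN hx
  have hTd : ∀ a b cc : Fin n, DifferentiableAt ℝ (d3 u a b cc) x :=
    fun a b cc => (smD3 hN hu a b cc).diffAt hN hx
  have hsimp : ∀ y ∈ N, Christoffel u k i j y
      = (1/2) * ∑ l, ginv u y k l * d3 u i j l y :=
    fun y hy => christoffel_at hN hu hy k i j
  rw [pd_congrOn hN hsimp hx m,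
    pd_const_mul m _ (DifferentiableAt.fun_sum fun l _ => (hGd k l).fun_mul (hTd i j l))]
  congr 1
  rw [pd_sum m (fun l _ => (hGd k l).fun_mul (hTd i j l))]
  refine Finset.sum_congr rfl fun l _ => ?_
  rw [pd_mul m (hGd k l) (hTd i j l), pd_ginv hN hu hx (hdet x hx) m k l]
  rfl

lemma pd_weight (hN : IsOpen N) (hu : Sm N u) (hx : x ∈ N) (k : Fin n) :
    pd k (weight u ξ v) x = (1/2) * ((∑ p, hessian u x k p * ξ p) + v k) := by
  have hd1 : DifferentiableAt ℝ (fun y => ∑ p, pd p u y * ξ p) x :=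
    DifferentiableAt.fun_sum fun p _ => ((hu.pd hN p).diffAt hN hx).mul_const _
  have hd2 : DifferentiableAt ℝ (fun y : Fin n → ℝ => ∑ q, v q * y q) x :=
    DifferentiableAt.fun_sum fun q _ => (diff_coord q).const_mul _
  show pd k (fun y => (1/2) * ((∑ p, pd p u y * ξ p) + ∑ q, v q * y q)) x = _
  rw [pd_const_mul k _ (hd1.fun_add hd2)]
  congr 1
  rw [pd_add k hd1 hd2, pd_linear_combo,
    pd_sum k (fun p _ => ((hu.pd hN p).diffAt hN hx).mul_const _)]
  congr 1
  refine Finset.sum_congr rfl fun p _ => ?_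
  rw [pd_mul_const k (ξ p) ((hu.pd hN p).diffAt hN hx)]
  rfl

lemma pd2_weight (hN : IsOpen N) (hu : Sm N u) (hx : x ∈ N) (i j : Fin n) :
    pd i (pd j (weight u ξ v)) x = (1/2) * ∑ p, d3 u i j p x * ξ p := by
  have hsimp : ∀ y ∈ N, pd j (weight u ξ v) y
      = (1/2) * ((∑ p, pd j (pd p u) y * ξ p) + v j) :=
    fun y hy => pd_weight hN hu hy j
  have hd1 : DifferentiableAt ℝ (fun y => ∑ p, pd j (pd p u) y * ξ p) x :=
    DifferentiableAt.fun_sum fun p _ => (((hu.pd hN p).pd hN j).diffAt hN hx).mul_const _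
  rw [pd_congrOn hN hsimp hx i,
    pd_const_mul i _ (hd1.add_const _)]
  congr 1
  rw [pd_add i hd1 (differentiableAt_const _), pd_const, add_zero,
    pd_sum i (fun p _ => (((hu.pd hN p).pd hN j).diffAt hN hx).mul_const _)]
  refine Finset.sum_congr rfl fun p _ => ?_
  rw [pd_mul_const i (ξ p) (((hu.pd hN p).pd hN j).diffAt hN hx)]
  rfl

lemma ginv_symm (hN : IsOpen N) (hu : Sm N u) (hx : x ∈ N) (a b : Fin n) :
    ginv u x a b = ginv u x b a := by
  have h1 : (hessian u x).transpose = hessian u x :=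
    Matrix.ext fun p q => by
      rw [Matrix.transpose_apply]; exact hessian_symm hN hu hx q p
  have h2 := Matrix.transpose_nonsing_inv (hessian u x)
  have h3 : (ginv u x).transpose = ginv u x := by
    show ((hessian u x)⁻¹).transpose = (hessian u x)⁻¹
    rw [h2, h1]
  conv_lhs => rw [← h3]
  rw [Matrix.transpose_apply]

end Bridge

theorem bakry_emery_identity {n : ℕ} (hn : 1 ≤ n) (N : Set (Fin n → ℝ)) (hNopen : IsOpen N)
    (hNne : N.Nonempty) (u : (Fin n → ℝ) → ℝ) (hu : ContDiffOn ℝ (⊤ : ℕ∞) u N)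
    (hpos : ∀ x ∈ N, (hessian u x).PosDef)
    (v ξ : Fin n → ℝ) (c : ℝ) (hMA : MAeq u N v ξ c) :
    ∀ x ∈ N, ∀ i j : Fin n,
      ricciPhi u (weight u ξ v) i j x =
        (1/4) * ∑ p, ∑ q, ∑ k, ∑ l, ginv u x p q * ginv u x k l *
          d3 u i p k x * d3 u j q l x := by
  intro x hx i j
  have hu' : Sm N u := hu.of_le (by simp)
  have hdet : ∀ y ∈ N, IsUnit (hessian u y).det :=
    fun y hy => isUnit_iff_ne_zero.2 (ne_of_gt (hpos y hy).det_pos)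
  have hT1 : ∀ a b cc : Fin n, d3 u a b cc x = d3 u b a cc x :=
    fun a b cc => d3_swap12 hNopen hu' hx a b cc
  have hT2 : ∀ a b cc : Fin n, d3 u a b cc x = d3 u a cc b x :=
    fun a b cc => d3_swap23 hNopen hu' hx a b cc
  have hGs : ∀ a b : Fin n, ginv u x a b = ginv u x b a :=
    fun a b => ginv_symm hNopen hu' hx a b
  have hGH : ∀ a cc : Fin n, (∑ b, ginv u x a b * hessian u x b cc)
      = if a = cc then 1 else 0 := by
    intro a cc
    rw [show (∑ b, ginv u x a b * hessian u x b cc)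
        = ((hessian u x)⁻¹ * hessian u x) a cc from (Matrix.mul_apply).symm,
      Matrix.nonsing_inv_mul _ (hdet x hx), Matrix.one_apply]
  have hK1 := fun m => key1 hNopen hu' hpos hMA hx m
  have hK2 := key2 hNopen hu' hpos hMA hx i j
  have hQ13 : ∀ k l : Fin n, d4 u k i j l x = d4 u j i k l x := by
    intro k l
    rw [d4_swap12 hNopen hu' hx k i j l, d4_swap23 hNopen hu' hx i k j l,
      d4_swap12 hNopen hu' hx i j k l]
  have hric : Ricci u i j x
      = ((∑ k, (1/2) * ∑ l, ((-∑ a, ∑ b, ginv u x k a * d3 u k a b x * ginv u x b l)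
            * d3 u i j l x + ginv u x k l * d4 u k i j l x))
        - (∑ k, (1/2) * ∑ l, ((-∑ a, ∑ b, ginv u x k a * d3 u j a b x * ginv u x b l)
            * d3 u i k l x + ginv u x k l * d4 u j i k l x))
        + (∑ k, ∑ p, ((1/2) * ∑ l, ginv u x k l * d3 u k p l x)
            * ((1/2) * ∑ l, ginv u x p l * d3 u i j l x))
        - (∑ k, ∑ p, ((1/2) * ∑ l, ginv u x k l * d3 u j p l x)
            * ((1/2) * ∑ l, ginv u x p l * d3 u i k l x))) := by
    have e3 : (∑ k, ∑ p, Christoffel u k k p x * Christoffel u p i j x)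
        = ∑ k, ∑ p, ((1/2) * ∑ l, ginv u x k l * d3 u k p l x)
            * ((1/2) * ∑ l, ginv u x p l * d3 u i j l x) :=
      Finset.sum_congr rfl fun k _ => Finset.sum_congr rfl fun p _ => by
        rw [christoffel_at hNopen hu' hx k k p, christoffel_at hNopen hu' hx p i j]
    have e4 : (∑ k, ∑ p, Christoffel u k j p x * Christoffel u p i k x)
        = ∑ k, ∑ p, ((1/2) * ∑ l, ginv u x k l * d3 u j p l x)
            * ((1/2) * ∑ l, ginv u x p l * d3 u i k l x) :=
      Finset.sum_congr rfl fun k _ => Finset.sum_congr rfl fun p _ => by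
        rw [christoffel_at hNopen hu' hx k j p, christoffel_at hNopen hu' hx p i k]
    show (∑ k, pd k (Christoffel u k i j) x) - (∑ k, pd j (Christoffel u k i k) x)
        + (∑ k, ∑ p, Christoffel u k k p x * Christoffel u p i j x)
        - (∑ k, ∑ p, Christoffel u k j p x * Christoffel u p i k x) = _
    rw [Finset.sum_congr rfl fun k (_ : k ∈ Finset.univ) =>
        pd_christoffel hNopen hu' hdet hx k k i j,
      Finset.sum_congr rfl fun k (_ : k ∈ Finset.univ) =>
        pd_christoffel hNopen hu' hdet hx j k i k, e3, e4]
  have hcov : covHess u (weight u ξ v) i j x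
      = ((1/2) * ∑ p, d3 u i j p x * ξ p
        - ∑ k, ((1/2) * ∑ l, ginv u x k l * d3 u i j l x)
          * ((1/2) * ((∑ p, hessian u x k p * ξ p) + v k))) := by
    show pd i (pd j (weight u ξ v)) x
        - ∑ k, Christoffel u k i j x * pd k (weight u ξ v) x = _
    rw [pd2_weight hNopen hu' hx i j]
    congr 1
    exact Finset.sum_congr rfl fun k _ => by
      rw [christoffel_at hNopen hu' hx k i j, pd_weight hNopen hu' hx k]
  show Ricci u i j x + covHess u (weight u ξ v) i j x = _
  rw [hric, hcov]
  exact final_algebra (ginv u x) (hessian u x) (fun a b cc => d3 u a b cc x)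
    (fun a b cc d => d4 u a b cc d x) v ξ i j hT1 hT2 hGs hGH hK1 hK2 hQ13


end KRS
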